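/- Let R be a commutative ring, n ≥ 1, and x_1,…,x_n, b_1,…,b_n ∈ R. Then: (a) for every k ≥ 0, e_{k+1}^{(b)}(x_1,…,x_n) = Σ_{z=0}^{k} (−1)^z·p_{z+1}^{(b)}(x_1,…,x_n)·e_{k−z}(x_1,…,x_n); and (b) p_{n+1}^{(b)}(x_1,…,x_n) = Σ_{z=0}^{n−1} (−1)^{n−z+1}·p_{z+1}^{(b)}(x_1,…,x_n)·e_{n−z}(x_1,…,x_n). -/

import Mathlib

open Finset

/-- The elementary symmetric polynomial `e_k(x_1,…,x_n)` (with `e_0 = 1`, `e_k = 0` for `k > n`). -/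
def esym {R : Type*} [CommRing R] (n : ℕ) (x : Fin n → R) (k : ℕ) : R :=
  ∑ s ∈ Finset.univ.powersetCard k, ∏ i ∈ s, x i

/-- The weighted elementary symmetric polynomial
`e_k^{(b)}(x_1,…,x_n) = Σ_{i_1<⋯<i_k} (b_{i_1}+⋯+b_{i_k})·x_{i_1}⋯x_{i_k}`. -/
def esymWt {R : Type*} [CommRing R] (n : ℕ) (x b : Fin n → R) (k : ℕ) : R :=
  ∑ s ∈ Finset.univ.powersetCard k, (∑ i ∈ s, b i) * ∏ i ∈ s, x i

/-- The weighted power sum `p_k^{(b)}(x_1,…,x_n) = b_1·x_1^k + ⋯ + b_n·x_n^k`. -/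
def psumWt {R : Type*} [CommRing R] (n : ℕ) (x b : Fin n → R) (k : ℕ) : R :=
  ∑ i, b i * x i ^ k

/-!
Write `M(z, m) = ∑_{|s| = m} ∑_{i ∉ s} b_i x_i^z ∏_{j ∈ s} x_j` (`mixedSum`). Expanding
`p^{(b)}_{z+1} e_{m+1}` and splitting according to whether the index `i` of the power sum lies in
the subset `s` gives `M(z+1, m+1) + M(z+2, m)`, because a term with `i ∈ s` is the term of
`M(z+2, m)` for `s \ {i}`; likewise `e^{(b)}_{k+1} = M(1, k)` and `p^{(b)}_{k+1} e_0 = M(k+1, 0)`.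
Hence the alternating sum in (a) telescopes to `M(1, k) = e^{(b)}_{k+1}`. Part (b) is (a) at
`k = n`, where `e^{(b)}_{n+1} = 0` and `e_0 = 1`.
-/

section Combinatorics

variable {ι M : Type*} [Fintype ι] [DecidableEq ι] [AddCommMonoid M]

theorem sum_powersetCard_succ_sum_mem (G : ι → Finset ι → M) (m : ℕ) :
    ∑ s ∈ univ.powersetCard (m + 1), ∑ i ∈ s, G i s
      = ∑ t ∈ univ.powersetCard m, ∑ i ∈ tᶜ, G i (insert i t) := by
  rw [sum_sigma', sum_sigma']
  refine sum_nbij' (fun p => ⟨p.1.erase p.2, p.2⟩) (fun p => ⟨insert p.2 p.1, p.2⟩)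
    ?_ ?_ ?_ ?_ ?_ <;> rintro ⟨s, i⟩ hp <;>
    simp only [mem_sigma, mem_powersetCard_univ, mem_compl] at hp
  · simp [card_erase_of_mem hp.2, hp.1]
  · simp [card_insert_of_notMem hp.2, hp.1]
  · simp [insert_erase hp.2]
  · simp [erase_insert hp.2]
  · simp [insert_erase hp.2]

end Combinatorics

theorem sum_range_succ_neg_one_pow_mul_eq_of_telescoping {R : Type*} [CommRing R]
    (a t : ℕ → R) (k : ℕ) (ht : ∀ z < k, t z = a z + a (z + 1)) (htk : t k = a k) :
    ∑ z ∈ range (k + 1), (-1 : R) ^ z * t z = a 0 := by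
  have hterm : ∀ z ∈ range k,
      (-1 : R) ^ z * t z = (-1) ^ z * a z - (-1) ^ (z + 1) * a (z + 1) := by
    intro z hz
    rw [ht z (mem_range.mp hz), pow_succ]
    ring
  rw [sum_range_succ, sum_congr rfl hterm, sum_range_sub' (fun z => (-1 : R) ^ z * a z), htk]
  ring

theorem eq_sum_of_sum_range_succ_neg_one_pow_mul_eq_zero {R : Type*} [CommRing R]
    (c : ℕ → R) (n : ℕ) (h : ∑ z ∈ range (n + 1), (-1 : R) ^ z * c z = 0) :
    c n = ∑ z ∈ range n, (-1 : R) ^ (n - z + 1) * c z := by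
  have hsign : ∀ z ∈ range n,
      (-1 : R) ^ (n - z + 1) * c z = (-1) ^ (n + 1) * ((-1) ^ z * c z) := by
    intro z hz
    have hsplit : (-1 : R) ^ (n + 1) = (-1) ^ (n - z + 1) * (-1) ^ z := by
      rw [← pow_add]; congr 1; have := mem_range.mp hz; omega
    have hsq : ((-1 : R) ^ z) ^ 2 = 1 := by rw [← pow_mul, Even.neg_one_pow ⟨z, by ring⟩]
    linear_combination (-((-1) ^ z * c z)) * hsplit + (-((-1) ^ (n - z + 1) * c z)) * hsq
  have hlast : ∑ z ∈ range n, (-1 : R) ^ z * c z = -((-1) ^ n * c n) :=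
    eq_neg_of_add_eq_zero_left ((sum_range_succ _ n).symm.trans h)
  have hsq : ((-1 : R) ^ n) ^ 2 = 1 := by rw [← pow_mul, Even.neg_one_pow ⟨n, by ring⟩]
  rw [sum_congr rfl hsign, ← mul_sum, hlast]
  linear_combination (-c n) * hsq

section WeightedNewton

variable {R : Type*} [CommRing R] {n : ℕ} (x b : Fin n → R)

def mixedSum (z m : ℕ) : R :=
  ∑ s ∈ univ.powersetCard m, ∑ i ∈ sᶜ, b i * x i ^ z * ∏ j ∈ s, x j

theorem sum_powersetCard_succ_sum_mem_mul_prod (c : Fin n → R) (m : ℕ) :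
    ∑ s ∈ univ.powersetCard (m + 1), ∑ i ∈ s, c i * ∏ j ∈ s, x j
      = ∑ t ∈ univ.powersetCard m, ∑ i ∈ tᶜ, c i * x i * ∏ j ∈ t, x j := by
  rw [sum_powersetCard_succ_sum_mem (fun i s => c i * ∏ j ∈ s, x j)]
  refine sum_congr rfl fun t _ => sum_congr rfl fun i hi => ?_
  rw [prod_insert (mem_compl.mp hi), mul_assoc]

theorem esymWt_succ_eq_mixedSum (m : ℕ) : esymWt n x b (m + 1) = mixedSum x b 1 m := by
  simp only [esymWt, sum_mul, sum_powersetCard_succ_sum_mem_mul_prod, mixedSum, pow_one]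

theorem psumWt_mul_esym_succ (z m : ℕ) :
    psumWt n x b (z + 1) * esym n x (m + 1) =
      mixedSum x b (z + 1) (m + 1) + mixedSum x b (z + 2) m := by
  have hmem :
      ∑ s ∈ univ.powersetCard (m + 1), ∑ i ∈ s, b i * x i ^ (z + 1) * ∏ j ∈ s, x j
      = mixedSum x b (z + 2) m := by
    rw [sum_powersetCard_succ_sum_mem_mul_prod, mixedSum]
    simp only [pow_succ, mul_assoc]
  rw [← hmem, mixedSum, psumWt, esym, sum_mul_sum, sum_comm, ← sum_add_distrib]
  exact sum_congr rfl fun s _ => (sum_compl_add_sum s _).symm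

theorem psumWt_mul_esym_zero (z : ℕ) :
    psumWt n x b (z + 1) * esym n x 0 = mixedSum x b (z + 1) 0 := by
  simp [psumWt, esym, mixedSum]

theorem esymWt_succ_eq_sum (k : ℕ) :
    esymWt n x b (k + 1) =
      ∑ z ∈ range (k + 1), (-1 : R) ^ z * psumWt n x b (z + 1) * esym n x (k - z) := by
  simp only [mul_assoc]
  rw [esymWt_succ_eq_mixedSum]
  refine (sum_range_succ_neg_one_pow_mul_eq_of_telescoping
    (fun z => mixedSum x b (z + 1) (k - z)) _ k ?_ ?_).symm
  · intro z hz
    rw [show k - z = k - (z + 1) + 1 by omega, psumWt_mul_esym_succ]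
  · rw [Nat.sub_self, psumWt_mul_esym_zero]

theorem esymWt_eq_zero_of_lt {k : ℕ} (hk : n < k) : esymWt n x b k = 0 := by
  have hcard : #(univ : Finset (Fin n)) < k := by simpa using hk
  simp [esymWt, powersetCard_eq_empty.mpr hcard]

end WeightedNewton

theorem stmt19 {R : Type*} [CommRing R] (n : ℕ) (x b : Fin n → R) :
    (∀ k : ℕ, esymWt n x b (k + 1) =
      ∑ z ∈ Finset.range (k + 1), (-1 : R) ^ z * psumWt n x b (z + 1) * esym n x (k - z)) ∧
    psumWt n x b (n + 1) =
      ∑ z ∈ Finset.range n, (-1 : R) ^ (n - z + 1) * psumWt n x b (z + 1) * esym n x (n - z) := by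
  refine ⟨esymWt_succ_eq_sum x b, ?_⟩
  have h := esymWt_succ_eq_sum x b n
  rw [esymWt_eq_zero_of_lt x b n.lt_succ_self] at h
  simp only [mul_assoc] at h ⊢
  simpa [esym] using eq_sum_of_sum_range_succ_neg_one_pow_mul_eq_zero
    (fun z => psumWt n x b (z + 1) * esym n x (n - z)) n h.symm
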